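/- Let G be a countably infinite group. There exists a sequence (R_n)_{n∈ℕ} of finite subsets of G such that for all g, h ∈ G and n, k ∈ ℕ, if g ≠ h or n ≠ k then g·R_n ≠ h·R_k. Consequently, the Koopman representation of the Bernoulli shift G ↷ (K^G, κ^G) with (K, κ) nontrivial contains the left-regular representation with infinite multiplicity on the orthocomplement of the constants. -/

import Mathlib

open MeasureTheory
open scoped ENNReal

/-!
Choose `R n` of size `n + 3` with trivial left stabilizer: if `1, r₀ ∈ S` with `r₀ ≠ 1`, adding
to `S` a point `x` outside the finite set `S⁻¹ S ∪ S r₀⁻¹` leaves no nontrivial `g` with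
`g (insert x S) = insert x S`. Then `g R n = h R k` forces `n = k` by counting and
`h⁻¹ g ∈ Stab (R n)`, so the translates `g R n` are pairwise distinct.

For nontrivial `κ` pick a two-valued `φ` with `∫ φ dκ = 0` and `∫ φ² dκ = 1`. Since the coordinates
are independent, the functions `χ_F x = ∏_{r ∈ F} φ (x r)`, `F` finite, are orthonormal in
`L²(κ^G)`, `χ_∅ = 1`, and the shift by `t` maps `χ_F` to `χ_{t F}`. Hence `δ_(g,n) ↦ χ_{g R n}`
extends to a `G`-equivariant isometry from `ℓ²(G × ℕ)` whose range is orthogonal to `χ_∅`.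
-/

noncomputable def lpCongr {α β : Type*} (e : α ≃ β) :
    lp (fun _ : β => ℂ) 2 →ₗᵢ[ℂ] lp (fun _ : α => ℂ) 2 where
  toFun f := ⟨fun a => f (e a), by
    apply memℓp_gen
    exact (e.summable_iff (f := fun b => ‖f b‖ ^ (2 : ℝ≥0∞).toReal)).2
      ((memℓp_gen_iff (by norm_num)).1 (lp.memℓp f))⟩
  map_add' f g := rfl
  map_smul' c f := rfl
  norm_map' f := by
    rw [lp.norm_eq_tsum_rpow (by norm_num), lp.norm_eq_tsum_rpow (by norm_num)]
    congr 1
    exact e.tsum_eq (fun b => ‖f b‖ ^ (2 : ℝ≥0∞).toReal)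

section TrivialStabilizer

open Finset Pointwise

variable {G : Type*} [Group G] [DecidableEq G]

theorem stabilizer_insert_eq_bot {S : Finset G} (h1 : 1 ∈ S) {r₀ : G} (hr₀S : r₀ ∈ S)
    (hr₀ : r₀ ≠ 1) {x : G} (hx : ∀ s ∈ S, s * x ∉ S) (hxr : x * r₀ ∉ S) :
    MulAction.stabilizer G (insert x S) = ⊥ := by
  refine (Subgroup.eq_bot_iff_forall _).2 fun g hg => ?_
  have hmem : ∀ y ∈ insert x S, g * y ∈ insert x S := fun y hy =>
    (MulAction.mem_stabilizer_iff.1 hg) ▸ smul_mem_smul_finset hy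
  rcases mem_insert.1 (mul_one g ▸ hmem 1 (mem_insert_of_mem h1)) with rfl | hgS
  · rcases mem_insert.1 (hmem r₀ (mem_insert_of_mem hr₀S)) with h | h
    · exact absurd (mul_eq_left.1 h) hr₀
    · exact absurd h hxr
  · rcases mem_insert.1 (hmem x (mem_insert_self x S)) with h | h
    · exact mul_eq_right.1 h
    · exact absurd h (hx g hgS)

variable [Infinite G]

theorem exists_card_eq_stabilizer_eq_bot {n : ℕ} (hn : 3 ≤ n) :
    ∃ S : Finset G, S.card = n ∧ MulAction.stabilizer G S = ⊥ := by
  obtain ⟨T, h1T, hT⟩ :=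
    Infinite.exists_superset_card_eq ({1} : Finset G) (n - 1) (by simp; omega)
  have h1 : (1 : G) ∈ T := h1T (mem_singleton_self 1)
  obtain ⟨r₀, hr₀T, hr₀⟩ := T.exists_mem_ne (by omega) 1
  obtain ⟨x, hx⟩ := Infinite.exists_notMem_finset (T⁻¹ * T ∪ T * {r₀⁻¹})
  rw [mem_union, not_or] at hx
  have hxT : ∀ s ∈ T, s * x ∉ T := fun s hs hsx =>
    hx.1 (by simpa using mul_mem_mul (inv_mem_inv hs) hsx)
  have hxr : x * r₀ ∉ T := fun h =>
    hx.2 (by simpa using mul_mem_mul h (mem_singleton_self r₀⁻¹))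
  refine ⟨insert x T, ?_, stabilizer_insert_eq_bot h1 hr₀T hr₀ hxT hxr⟩
  rw [card_insert_of_notMem (by simpa using hxT 1 h1), hT]
  omega

theorem exists_smul_finset_injective :
    ∃ R : ℕ → Finset G, (∀ n, (R n).Nonempty) ∧
      Function.Injective fun i : G × ℕ => i.1 • R i.2 := by
  choose R hcard hstab using fun n : ℕ =>
    exists_card_eq_stabilizer_eq_bot (G := G) (n := n + 3) (by omega)
  refine ⟨R, fun n => card_pos.1 (by rw [hcard]; omega), ?_⟩
  rintro ⟨g, n⟩ ⟨h, k⟩ (hgh : g • R n = h • R k)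
  obtain rfl : n = k := by simpa [hcard] using congrArg card hgh
  have : h⁻¹ * g ∈ MulAction.stabilizer G (R n) := by
    rw [MulAction.mem_stabilizer_iff, mul_smul, hgh, inv_smul_smul]
  rw [hstab, Subgroup.mem_bot, inv_mul_eq_one] at this
  rw [this]

end TrivialStabilizer

section TwoValued

variable {K : Type*} [MeasurableSpace K] {κ : Measure K} [IsProbabilityMeasure κ] {A : Set K}

theorem integral_ite_mem [DecidablePred (· ∈ A)] (hA : MeasurableSet A) (a b : ℝ) :
    ∫ y, (if y ∈ A then a else b) ∂κ = a * κ.real A + b * (1 - κ.real A) := by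
  change ∫ y, A.piecewise (fun _ => a) (fun _ => b) y ∂κ = _
  rw [integral_piecewise hA integrableOn_const integrableOn_const, setIntegral_const,
    setIntegral_const, probReal_compl_eq_one_sub hA, smul_eq_mul, smul_eq_mul]
  ring

theorem exists_integral_eq_zero_integral_sq_eq_one (hA : MeasurableSet A) (hA0 : 0 < κ A)
    (hA1 : κ A < 1) :
    ∃ φ : K → ℝ, Measurable φ ∧ ∫ y, φ y ∂κ = 0 ∧ ∫ y, φ y ^ 2 ∂κ = 1 := by
  classical
  set p := κ.real A
  have hp0 : 0 < p := ENNReal.toReal_pos hA0.ne' (measure_ne_top κ A)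
  have hp1 : p < 1 :=
    ((ENNReal.toReal_lt_toReal (measure_ne_top κ A) ENNReal.one_ne_top).2 hA1).trans_eq
      ENNReal.toReal_one
  set s := Real.sqrt (p * (1 - p))
  have hs : s ^ 2 = p * (1 - p) := Real.sq_sqrt (by nlinarith)
  have hs0 : s ≠ 0 := by positivity
  refine ⟨fun y => if y ∈ A then (1 - p) / s else -p / s,
    measurable_const.ite hA measurable_const, ?_, ?_⟩
  · rw [integral_ite_mem hA]
    field_simp
    ring
  · simp only [apply_ite (· ^ 2)]
    rw [integral_ite_mem hA]
    field_simp
    rw [hs]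
    ring

end TwoValued

section Bernoulli

open Finset Pointwise

variable {G K : Type*} [MeasurableSpace K]

def IsBernoulliMeasure (κ : Measure K) (μ : Measure (G → K)) : Prop :=
  ∀ (F : Finset G) (A : G → Set K), (∀ r, MeasurableSet (A r)) →
    μ {x | ∀ r ∈ F, x r ∈ A r} = ∏ r ∈ F, κ (A r)

namespace IsBernoulliMeasure

variable {κ : Measure K} {μ : Measure (G → K)}

theorem map_restrict_eq_pi [SigmaFinite κ] (hμ : IsBernoulliMeasure κ μ) (F : Finset G) :
    μ.map (fun x (r : F) => x r) = Measure.pi fun _ : F => κ := by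
  classical
  refine (Measure.pi_eq fun A hA => ?_).symm
  rw [Measure.map_apply (by fun_prop) (.univ_pi hA)]
  let A' : G → Set K := fun r => if hr : r ∈ F then A ⟨r, hr⟩ else Set.univ
  have hA' : ∀ r, MeasurableSet (A' r) := fun r => by
    by_cases hr : r ∈ F <;> simp [A', hr, hA]
  convert hμ F A' hA' using 1
  · congr 1
    ext x
    simp only [Set.mem_preimage, Set.mem_univ_pi, Set.mem_ofPred_eq, Subtype.forall]
    exact forall₂_congr fun r hr => by simp only [A', dif_pos hr]
  · rw [← prod_coe_sort F]
    refine prod_congr rfl fun r _ => ?_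
    simp [A']

theorem integral_prod [SigmaFinite κ] (hμ : IsBernoulliMeasure κ μ) {𝕜 : Type*} [RCLike 𝕜]
    (F : Finset G) {f : G → K → 𝕜} (hf : ∀ r, Measurable (f r)) :
    ∫ x, ∏ r ∈ F, f r (x r) ∂μ = ∏ r ∈ F, ∫ y, f r y ∂κ := by
  have hmap := hμ.map_restrict_eq_pi F
  have hrestrict : Measurable fun (x : G → K) (r : F) => x r :=
    measurable_pi_lambda _ fun r => measurable_pi_apply (r : G)
  calc ∫ x, ∏ r ∈ F, f r (x r) ∂μ
      = ∫ x, (fun y : F → K => ∏ r : F, f r (y r)) (fun r : F => x r) ∂μ :=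
        integral_congr_ae (.of_forall fun x => (prod_coe_sort F fun r => f r (x r)).symm)
    _ = ∫ y : F → K, ∏ r : F, f r (y r) ∂(Measure.pi fun _ : F => κ) := by
        rw [← hmap, integral_map hrestrict.aemeasurable]
        exact (Finset.measurable_fun_prod (f := fun (r : F) (y : F → K) => f r (y r)) univ
          fun r _ => (hf r).comp (measurable_pi_apply r)).aestronglyMeasurable
    _ = ∏ r ∈ F, ∫ y, f r y ∂κ := by
        rw [integral_fintype_prod_eq_prod, prod_coe_sort F fun r => ∫ y, f r y ∂κ]

variable [SigmaFinite κ] {φ : K → ℝ}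

theorem integral_prod_mul_prod [DecidableEq G] (hμ : IsBernoulliMeasure κ μ) (hφ : Measurable φ)
    (hφ0 : ∫ y, φ y ∂κ = 0) (hφ1 : ∫ y, φ y ^ 2 ∂κ = 1) (S T : Finset G) :
    ∫ x, (∏ r ∈ S, φ (x r)) * ∏ r ∈ T, φ (x r) ∂μ = if S = T then 1 else 0 := by
  let ψ : G → K → ℝ := fun r y => (if r ∈ S then φ y else 1) * (if r ∈ T then φ y else 1)
  have hψ : ∀ r ∈ S ∪ T, ∫ y, ψ r y ∂κ = if r ∈ S ∧ r ∈ T then 1 else 0 := by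
    intro r hr
    by_cases hS : r ∈ S <;> by_cases hT : r ∈ T <;> simp_all [ψ, sq]
  have hprod : ∀ x : G → K,
      (∏ r ∈ S, φ (x r)) * ∏ r ∈ T, φ (x r) = ∏ r ∈ S ∪ T, ψ r (x r) := fun x => by
    rw [prod_mul_distrib, prod_ite_mem, prod_ite_mem, union_inter_cancel_left,
      union_inter_cancel_right]
  simp_rw [hprod]
  have hψm : ∀ r, Measurable (ψ r) := fun r =>
    (by split_ifs <;> fun_prop : Measurable fun y => if r ∈ S then φ y else 1).mul
      (by split_ifs <;> fun_prop)
  rw [hμ.integral_prod _ hψm, prod_congr rfl hψ, prod_boole]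
  congr 1
  exact propext ⟨fun h => ext fun r => ⟨fun hr => (h r (mem_union_left _ hr)).2,
    fun hr => (h r (mem_union_right _ hr)).1⟩, by rintro rfl; simp⟩

theorem memLp_prod (hμ : IsBernoulliMeasure κ μ) (hφ : Measurable φ)
    (hφ1 : ∫ y, φ y ^ 2 ∂κ = 1) (F : Finset G) :
    MemLp (fun x => ∏ r ∈ F, φ (x r)) 2 μ := by
  have hsq : ∫ x, (∏ r ∈ F, φ (x r)) ^ 2 ∂μ = 1 := by
    simp_rw [← prod_pow]
    rw [hμ.integral_prod F fun _ => hφ.pow_const 2, hφ1, prod_const_one]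
  have hm : Measurable fun x : G → K => ∏ r ∈ F, φ (x r) :=
    Finset.measurable_fun_prod F fun r _ => hφ.comp (measurable_pi_apply r)
  -- a function that is not integrable has integral `0`
  exact (memLp_two_iff_integrable_sq hm.aestronglyMeasurable).2
    (.of_integral_ne_zero (by rw [hsq]; exact one_ne_zero))

noncomputable def prodLp (hμ : IsBernoulliMeasure κ μ) (hφ : Measurable φ)
    (hφ1 : ∫ y, φ y ^ 2 ∂κ = 1) (F : Finset G) : Lp ℂ 2 μ :=
  (hμ.memLp_prod hφ hφ1 F).ofReal.toLp fun x => ((∏ r ∈ F, φ (x r) : ℝ) : ℂ)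

variable (hμ : IsBernoulliMeasure κ μ) (hφ : Measurable φ) (hφ1 : ∫ y, φ y ^ 2 ∂κ = 1)

theorem coeFn_prodLp (F : Finset G) :
    hμ.prodLp hφ hφ1 F =ᵐ[μ] fun x => ((∏ r ∈ F, φ (x r) : ℝ) : ℂ) :=
  MemLp.coeFn_toLp _

theorem orthonormal_prodLp (hφ0 : ∫ y, φ y ∂κ = 0) : Orthonormal ℂ (hμ.prodLp hφ hφ1) := by
  classical
  refine orthonormal_iff_ite.2 fun S T => ?_
  rw [L2.inner_def]
  calc ∫ x, inner ℂ (hμ.prodLp hφ hφ1 S x) (hμ.prodLp hφ hφ1 T x) ∂μ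
      = ∫ x, (((∏ r ∈ S, φ (x r)) * ∏ r ∈ T, φ (x r) : ℝ) : ℂ) ∂μ := by
        refine integral_congr_ae ?_
        filter_upwards [hμ.coeFn_prodLp hφ hφ1 S, hμ.coeFn_prodLp hφ hφ1 T] with x hS hT
        simp [hS, hT, mul_comm]
    _ = if S = T then 1 else 0 := by
        rw [integral_complex_ofReal, hμ.integral_prod_mul_prod hφ hφ0 hφ1]
        split_ifs <;> simp

theorem integral_eq_inner_prodLp_empty (g : Lp ℂ 2 μ) :
    ∫ x, g x ∂μ = inner ℂ (hμ.prodLp hφ hφ1 ∅) g := by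
  rw [L2.inner_def]
  refine integral_congr_ae ?_
  filter_upwards [hμ.coeFn_prodLp hφ hφ1 ∅] with x hx
  simp [hx]

theorem compMeasurePreserving_prodLp [Group G] [DecidableEq G] (t : G)
    (ht : MeasurePreserving (fun (x : G → K) (t' : G) => x (t * t')) μ μ) (F : Finset G) :
    Lp.compMeasurePreserving _ ht (hμ.prodLp hφ hφ1 F) = hμ.prodLp hφ hφ1 (t • F) := by
  refine (Lp.toLp_compMeasurePreserving _ ht).trans
    (MemLp.toLp_congr _ _ (.of_forall fun x => ?_))
  change ((∏ r ∈ F, φ (x (t * r)) : ℝ) : ℂ) = ((∏ r ∈ F.image (t * ·), φ (x r) : ℝ) : ℂ)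
  rw [prod_image fun _ _ _ _ => mul_left_cancel]

end IsBernoulliMeasure

end Bernoulli

theorem lpCongr_single {α β : Type*} [DecidableEq α] [DecidableEq β] (e : α ≃ β) (i : β)
    (a : ℂ) : lpCongr e (lp.single 2 i a) = lp.single 2 (e.symm i) a := by
  ext x
  change (lp.single 2 i a : β → ℂ) (e x) = (lp.single 2 (e.symm i) a : α → ℂ) x
  simp [lp.single_apply, Pi.single_apply, ← Equiv.eq_symm_apply]

namespace Orthonormal

variable {ι E : Type*} [NormedAddCommGroup E] [InnerProductSpace ℂ E] [CompleteSpace E]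
  {v : ι → E} (hv : Orthonormal ℂ v)

theorem linearIsometry_lpCongr (e : ι ≃ ι) {W : E →ₗᵢ[ℂ] E} (hW : ∀ i, W (v i) = v (e.symm i))
    (f : lp (fun _ : ι => ℂ) 2) :
    hv.orthogonalFamily.linearIsometry (lpCongr e f) =
      W (hv.orthogonalFamily.linearIsometry f) := by
  classical
  let V := hv.orthogonalFamily.linearIsometry.toContinuousLinearMap
  have : V.comp (lpCongr e).toContinuousLinearMap = W.toContinuousLinearMap.comp V :=
    lp.ext_continuousLinearMap ENNReal.ofNat_ne_top fun i => ContinuousLinearMap.ext fun a => by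
      simp [V, lpCongr_single, OrthogonalFamily.linearIsometry_apply_single, hW]
  exact congr($this f)

theorem inner_linearIsometry_eq_zero {u : E} (hu : ∀ i, inner ℂ u (v i) = 0)
    (f : lp (fun _ : ι => ℂ) 2) : inner ℂ u (hv.orthogonalFamily.linearIsometry f) = 0 := by
  classical
  have : (innerSL ℂ u).comp hv.orthogonalFamily.linearIsometry.toContinuousLinearMap = 0 :=
    lp.ext_continuousLinearMap ENNReal.ofNat_ne_top fun i => ContinuousLinearMap.ext fun a => by
      simp [OrthogonalFamily.linearIsometry_apply_single, hu]
  exact congr($this f)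

end Orthonormal

theorem stmt13_general {G : Type} [Group G] [Infinite G] [DecidableEq G] :
    ∃ R : ℕ → Finset G,
      (∀ (g h : G) (n k : ℕ), g ≠ h ∨ n ≠ k →
        (R n).image (fun r => g * r) ≠ (R k).image (fun r => h * r)) ∧
      (∀ (K : Type) (_ : MeasurableSpace K) (κ : Measure K), IsProbabilityMeasure κ →
        (∃ A : Set K, MeasurableSet A ∧ 0 < κ A ∧ κ A < 1) →
        ∀ (μ : Measure (G → K)), IsProbabilityMeasure μ →
        (∀ (F : Finset G) (A : G → Set K), (∀ r, MeasurableSet (A r)) →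
          μ {x | ∀ r ∈ F, x r ∈ A r} = ∏ r ∈ F, κ (A r)) →
        ∀ hinv : ∀ g : G, MeasurePreserving (fun (x : G → K) (t : G) => x (g * t)) μ μ,
        ∃ V : lp (fun _ : G × ℕ => ℂ) 2 →ₗᵢ[ℂ] Lp ℂ 2 μ,
          (∀ (t : G) (f : lp (fun _ : G × ℕ => ℂ) 2),
            V (lpCongr (Equiv.prodCongr (Equiv.mulLeft t⁻¹) (Equiv.refl ℕ)) f) =
              (Lp.compMeasurePreservingₗᵢ ℂ (fun (x : G → K) (t' : G) => x (t * t'))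
                (hinv t)) (V f)) ∧
          (∀ f, ∫ x, (V f) x ∂μ = 0)) := by
  obtain ⟨R, hRne, hR⟩ := exists_smul_finset_injective (G := G)
  refine ⟨R, fun g h n k hne heq => ?_, ?_⟩
  · obtain ⟨rfl, rfl⟩ := Prod.ext_iff.1 (@hR (g, n) (h, k) heq)
    simp at hne
  rintro K _ κ _ ⟨A, hA, hA0, hA1⟩ μ _ (hμ : IsBernoulliMeasure κ μ) hinv
  obtain ⟨φ, hφ, hφ0, hφ1⟩ := exists_integral_eq_zero_integral_sq_eq_one hA hA0 hA1
  have hw := hμ.orthonormal_prodLp hφ hφ1 hφ0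
  have hv := hw.comp _ hR
  refine ⟨hv.orthogonalFamily.linearIsometry, fun t f => ?_, fun f => ?_⟩
  · refine hv.linearIsometry_lpCongr _ (fun i => ?_) f
    exact (hμ.compMeasurePreserving_prodLp hφ hφ1 t (hinv t) _).trans
      (by open Pointwise in simp [smul_smul])
  · rw [hμ.integral_eq_inner_prodLp_empty hφ hφ1]
    refine hv.inner_linearIsometry_eq_zero (fun i => hw.inner_eq_zero ?_) f
    open Pointwise in exact ((hRne i.2).smul_finset).ne_empty.symm

/-- In a countably infinite group `G` there is a sequence of finite sets `R_n` with
`g·R_n ≠ h·R_k` whenever `(g,n) ≠ (h,k)`. Consequently, for any nontrivial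
probability space `(K,κ)`, the Koopman representation of the Bernoulli shift
`G ↷ (K^G, κ^G)` contains the left-regular representation with infinite
multiplicity on the orthocomplement of the constants: there is a `G`-equivariant
linear isometry from `ℓ²(G × ℕ)` into `L²(κ^G)` with range orthogonal to the
constants. -/
theorem stmt13 {G : Type} [Group G] [Countable G] [Infinite G] [DecidableEq G] :
    ∃ R : ℕ → Finset G,
      (∀ (g h : G) (n k : ℕ), g ≠ h ∨ n ≠ k →
        (R n).image (fun r => g * r) ≠ (R k).image (fun r => h * r)) ∧
      (∀ (K : Type) (_ : MeasurableSpace K) (κ : Measure K), IsProbabilityMeasure κ →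
        (∃ A : Set K, MeasurableSet A ∧ 0 < κ A ∧ κ A < 1) →
        ∀ (μ : Measure (G → K)), IsProbabilityMeasure μ →
        (∀ (F : Finset G) (A : G → Set K), (∀ r, MeasurableSet (A r)) →
          μ {x | ∀ r ∈ F, x r ∈ A r} = ∏ r ∈ F, κ (A r)) →
        ∀ hinv : ∀ g : G, MeasurePreserving (fun (x : G → K) (t : G) => x (g * t)) μ μ,
        ∃ V : lp (fun _ : G × ℕ => ℂ) 2 →ₗᵢ[ℂ] Lp ℂ 2 μ,
          (∀ (t : G) (f : lp (fun _ : G × ℕ => ℂ) 2),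
            V (lpCongr (Equiv.prodCongr (Equiv.mulLeft t⁻¹) (Equiv.refl ℕ)) f) =
              (Lp.compMeasurePreservingₗᵢ ℂ (fun (x : G → K) (t' : G) => x (t * t'))
                (hinv t)) (V f)) ∧
          (∀ f, ∫ x, (V f) x ∂μ = 0)) :=
  stmt13_general
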